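/- In the lower-bound graph consisting of √n parallel paths joined to a balanced binary tree of depth log n − 1, with weights encoding set-disjointness instances X, Y ⊆ {1,…,√n}: if X ∩ Y ≠ ∅ then every connected dominating set contains at least one vertex of weight M = α·n + 1, while if X ∩ Y = ∅ then the set of all weight-1 vertices is a connected dominating set of total weight less than n. -/

import Mathlib

/-- Vertices of the lower-bound graph with `m = 2^d` columns: `2^d` parallel paths of length
`2^d` each (pairs `(i, j)`: path `i`, column `j`), plus a balanced binary tree of depth `d`
(node `⟨l, t⟩`: level `l`, index `t`), whose `2^d` leaves align with the columns. -/
def LBVertex (d : ℕ) := (Fin (2 ^ d) × Fin (2 ^ d)) ⊕ (Σ l : Fin (d + 1), Fin (2 ^ (l : ℕ)))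

instance (d : ℕ) : Fintype (LBVertex d) := by unfold LBVertex; infer_instance
instance (d : ℕ) : DecidableEq (LBVertex d) := by unfold LBVertex; infer_instance

/-- Edges: consecutive path vertices; tree node `⟨l, t⟩` to its children `⟨l+1, 2t⟩` and
`⟨l+1, 2t+1⟩`; each leaf `⟨d, t⟩` to all path vertices in column `t`. -/
def lbRel (d : ℕ) : LBVertex d → LBVertex d → Prop
  | Sum.inl (i, j), Sum.inl (i', j') => i = i' ∧ (j' : ℕ) = (j : ℕ) + 1
  | Sum.inr ⟨l, t⟩, Sum.inr ⟨l', t'⟩ =>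
      (l' : ℕ) = (l : ℕ) + 1 ∧ ((t' : ℕ) = 2 * (t : ℕ) ∨ (t' : ℕ) = 2 * (t : ℕ) + 1)
  | Sum.inr ⟨l, t⟩, Sum.inl (_, j) => (l : ℕ) = d ∧ (j : ℕ) = (t : ℕ)
  | _, _ => False

def lbGraph (d : ℕ) : SimpleGraph (LBVertex d) := SimpleGraph.fromRel (lbRel d)

/-- Weights encoding the set-disjointness instance `X, Y ⊆ {0,…,2^d−1}`: internal tree nodes,
Alice's leaf (leaf `0`), Bob's leaf (leaf `2^d−1`) and internal path nodes get weight `1`;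
the other leaves get weight `M`; the leftmost node of path `i` gets `M` iff `i ∈ X` else `1`;
the rightmost node of path `i` gets `M` iff `i ∈ Y` else `1`. -/
noncomputable def lbWeight (d : ℕ) (Xs Ys : Finset (Fin (2 ^ d))) (M : ℝ) :
    LBVertex d → ℝ
  | Sum.inl (i, j) =>
      if (j : ℕ) = 0 then (if i ∈ Xs then M else 1)
      else if (j : ℕ) = 2 ^ d - 1 then (if i ∈ Ys then M else 1) else 1
  | Sum.inr ⟨l, t⟩ =>
      if (l : ℕ) < d then 1
      else if (t : ℕ) = 0 ∨ (t : ℕ) = 2 ^ d - 1 then 1 else M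

/-!
Call a vertex light if its weight is `1` and heavy if it is `M`. If `i ∈ X ∩ Y`, both ends of
path `i` and every leaf above its interior are heavy, so no light vertex outside the interior of
path `i` is adjacent to it. A connected set of light vertices that dominates the vertex `(i, 1)`
must meet this interior and is therefore trapped inside it, so it cannot dominate any other path.

If `X ∩ Y = ∅`, every path has a light end, which is joined to Alice's or Bob's leaf and from
there through the light internal tree to the root; the light vertices thus form a connected
dominating set, and they miss at least one heavy leaf.
-/

namespace SimpleGraph
variable {V : Type*} {G : SimpleGraph V} {s t : Set V}

theorem subset_of_induce_connected (hs : (G.induce s).Connected)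
    (ht : ∀ a ∈ t, ∀ b ∈ s, G.Adj a b → b ∈ t) (hst : (s ∩ t).Nonempty) :
    s ⊆ t := by
  obtain ⟨a, has, hat⟩ := hst
  intro b hbs
  by_contra hbt
  obtain ⟨p⟩ := hs.preconnected ⟨a, has⟩ ⟨b, hbs⟩
  obtain ⟨e, -, he₁, he₂⟩ := p.exists_boundary_dart {x | x.1 ∈ t} hat hbt
  exact he₂ (ht _ he₁ _ e.snd.2 e.adj)

theorem induce_reachable_of_chain (f : ℕ → V) (n : ℕ) (hs : ∀ k ≤ n, f k ∈ s)
    (hadj : ∀ k < n, G.Adj (f k) (f (k + 1))) {a b : s} (ha : f 0 = a) (hb : f n = b) :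
    (G.induce s).Reachable a b := by
  induction n generalizing b with
  | zero => rw [Subtype.ext (ha.symm.trans hb)]
  | succ n ih =>
    obtain ⟨b, hbs⟩ := b
    subst hb
    exact (ih (fun k hk => hs k (by omega)) (fun k hk => hadj k (by omega))
      (b := ⟨f n, hs n n.le_succ⟩) rfl).trans (induce_adj.2 (hadj n n.lt_succ_self)).reachable

end SimpleGraph

lemma Nat.four_le_two_pow {d : ℕ} (hd : 2 ≤ d) : 4 ≤ 2 ^ d := by
  simpa using Nat.pow_le_pow_right two_pos hd

namespace LBVertex
variable {d : ℕ}

def path (i j : Fin (2 ^ d)) : LBVertex d := Sum.inl (i, j)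

def node (l : Fin (d + 1)) (t : Fin (2 ^ (l : ℕ))) : LBVertex d := Sum.inr ⟨l, t⟩

def leaf (t : Fin (2 ^ d)) : LBVertex d := node (Fin.last d) t

def root : LBVertex d := node 0 ⟨0, by simp⟩

def parent (l : Fin d) (t : Fin (2 ^ (l.succ : ℕ))) : LBVertex d :=
  node l.castSucc ⟨t / 2, by
    have := t.isLt
    simp only [Fin.val_succ, pow_succ] at this
    simp; omega⟩

lemma eq_path_or_eq_node (v : LBVertex d) :
    (∃ i j, v = path i j) ∨ ∃ l t, v = node l t := by
  rcases v with ⟨i, j⟩ | ⟨l, t⟩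
  exacts [.inl ⟨i, j, rfl⟩, .inr ⟨l, t, rfl⟩]

lemma lbRel_irrefl (a : LBVertex d) : ¬ lbRel d a a := by
  rcases a with ⟨i, j⟩ | ⟨l, t⟩ <;> simp [lbRel]

lemma lbGraph_adj {a b : LBVertex d} :
    (lbGraph d).Adj a b ↔ lbRel d a b ∨ lbRel d b a := by
  rw [lbGraph, SimpleGraph.fromRel_adj, and_iff_right_iff_imp]
  rintro h rfl
  exact lbRel_irrefl a (or_self_iff.1 h)

lemma adj_path_path {i j i' j' : Fin (2 ^ d)} :
    (lbGraph d).Adj (path i j) (path i' j') ↔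
      i = i' ∧ ((j' : ℕ) = j + 1 ∨ (j : ℕ) = j' + 1) := by
  rw [lbGraph_adj]
  simp only [lbRel, path]
  constructor
  · rintro (⟨rfl, h⟩ | ⟨rfl, h⟩) <;> omega
  · rintro ⟨rfl, h | h⟩
    exacts [.inl ⟨rfl, h⟩, .inr ⟨rfl, h⟩]

lemma adj_path_node {i j : Fin (2 ^ d)} {l : Fin (d + 1)} {t : Fin (2 ^ (l : ℕ))} :
    (lbGraph d).Adj (path i j) (node l t) ↔ (l : ℕ) = d ∧ (j : ℕ) = t := by
  rw [lbGraph_adj]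
  simp [lbRel, path, node]

lemma adj_node_node {l l' : Fin (d + 1)} {t : Fin (2 ^ (l : ℕ))} {t' : Fin (2 ^ (l' : ℕ))} :
    (lbGraph d).Adj (node l t) (node l' t') ↔
      ((l' : ℕ) = l + 1 ∧ (t' : ℕ) / 2 = t) ∨
        ((l : ℕ) = l' + 1 ∧ (t : ℕ) / 2 = t') := by
  rw [lbGraph_adj]
  simp only [lbRel, node]
  omega

lemma adj_path_leaf (i j : Fin (2 ^ d)) : (lbGraph d).Adj (path i j) (leaf j) :=
  adj_path_node.2 ⟨rfl, rfl⟩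

lemma adj_parent (l : Fin d) (t : Fin (2 ^ (l.succ : ℕ))) :
    (lbGraph d).Adj (node l.succ t) (parent l t) :=
  adj_node_node.2 (.inr ⟨rfl, rfl⟩)

section Weight
variable (Xs Ys : Finset (Fin (2 ^ d))) (M : ℝ)

lemma lbWeight_path (i j : Fin (2 ^ d)) :
    lbWeight d Xs Ys M (path i j) =
      if (j : ℕ) = 0 then (if i ∈ Xs then M else 1)
      else if (j : ℕ) = 2 ^ d - 1 then (if i ∈ Ys then M else 1) else 1 := rfl

lemma lbWeight_node (l : Fin (d + 1)) (t : Fin (2 ^ (l : ℕ))) :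
    lbWeight d Xs Ys M (node l t) =
      if (l : ℕ) < d then 1 else if (t : ℕ) = 0 ∨ (t : ℕ) = 2 ^ d - 1 then 1 else M := rfl

lemma lbWeight_path_of_pos_of_lt {i j : Fin (2 ^ d)} (h₀ : 0 < (j : ℕ))
    (h₁ : (j : ℕ) < 2 ^ d - 1) :
    lbWeight d Xs Ys M (path i j) = 1 := by
  simp [lbWeight_path, h₀.ne', h₁.ne]

lemma lbWeight_leaf (t : Fin (2 ^ d)) :
    lbWeight d Xs Ys M (leaf t) = if (t : ℕ) = 0 ∨ (t : ℕ) = 2 ^ d - 1 then 1 else M := by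
  simp [leaf, lbWeight_node]

lemma lbWeight_parent (l : Fin d) (t : Fin (2 ^ (l.succ : ℕ))) :
    lbWeight d Xs Ys M (parent l t) = 1 := by
  simp [parent, lbWeight_node]

lemma lbWeight_root (hd : 0 < d) : lbWeight d Xs Ys M root = 1 := by
  rw [root, lbWeight_node]
  simp [hd]

end Weight

def pathInterior (i : Fin (2 ^ d)) : Set (LBVertex d) :=
  {v | ∃ j : Fin (2 ^ d), 0 < (j : ℕ) ∧ (j : ℕ) < 2 ^ d - 1 ∧ v = path i j}

lemma eq_of_path_mem_pathInterior {i i' j : Fin (2 ^ d)} (h : path i' j ∈ pathInterior i) :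
    i' = i := by
  obtain ⟨j', -, -, h⟩ := h
  exact congrArg Prod.fst (Sum.inl_injective h)

section
variable {Xs Ys : Finset (Fin (2 ^ d))} {M : ℝ}

lemma mem_pathInterior_of_adj {i : Fin (2 ^ d)} (hX : i ∈ Xs) (hY : i ∈ Ys)
    {a b : LBVertex d} (ha : a ∈ pathInterior i) (hab : (lbGraph d).Adj a b)
    (hb : lbWeight d Xs Ys M b ≠ M) : b ∈ pathInterior i := by
  obtain ⟨j, hj₀, hj₁, rfl⟩ := ha
  rcases b.eq_path_or_eq_node with ⟨i', j', rfl⟩ | ⟨l, t, rfl⟩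
  · obtain ⟨rfl, hj'⟩ := adj_path_path.1 hab
    refine ⟨j', Nat.pos_of_ne_zero fun h₀ => hb ?_,
      lt_of_le_of_ne (by omega) fun h₁ => hb ?_, rfl⟩
    · rw [lbWeight_path, if_pos h₀, if_pos hX]
    · rw [lbWeight_path, if_neg (by omega), if_pos h₁, if_pos hY]
  · obtain ⟨hl, ht⟩ := adj_path_node.1 hab
    refine absurd ?_ hb
    rw [lbWeight_node, if_neg (by omega), if_neg (by omega)]

theorem exists_lbWeight_eq_of_mem_inter (hd : 2 ≤ d) {i : Fin (2 ^ d)} (hX : i ∈ Xs)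
    (hY : i ∈ Ys)
    (D : Set (LBVertex d)) (hdom : ∀ v, v ∉ D → ∃ u ∈ D, (lbGraph d).Adj v u)
    (hconn : ((lbGraph d).induce D).Connected) : ∃ v ∈ D, lbWeight d Xs Ys M v = M := by
  by_contra! hD
  have hclosed :
      ∀ a ∈ pathInterior i, ∀ b ∈ D, (lbGraph d).Adj a b → b ∈ pathInterior i :=
    fun a ha b hb hab => mem_pathInterior_of_adj hX hY ha hab (hD b hb)
  have h4 := Nat.four_le_two_pow hd
  have hstart : (D ∩ pathInterior i).Nonempty := by
    have h₁ : path i ⟨1, by omega⟩ ∈ pathInterior i := ⟨_, one_pos, by simp; omega, rfl⟩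
    by_cases h : path i ⟨1, by omega⟩ ∈ D
    · exact ⟨_, h, h₁⟩
    · obtain ⟨u, hu, hadj⟩ := hdom _ h
      exact ⟨u, hu, hclosed _ h₁ u hu hadj⟩
  have hsub := SimpleGraph.subset_of_induce_connected hconn hclosed hstart
  have : Nontrivial (Fin (2 ^ d)) := Fin.nontrivial_iff_two_le.2 (by omega)
  obtain ⟨i', hi'⟩ := exists_ne i
  obtain ⟨u, hu, hadj⟩ := hdom (path i' ⟨0, by omega⟩)
    fun h => hi' (eq_of_path_mem_pathInterior (hsub h))
  obtain ⟨j, -, -, rfl⟩ := hsub hu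
  exact hi' (adj_path_path.1 hadj).1

theorem exists_adj_lbWeight_eq_one (hd : 2 ≤ d) :
    ∀ v, v ∉ {u | lbWeight d Xs Ys M u = 1} →
      ∃ u ∈ {u | lbWeight d Xs Ys M u = 1}, (lbGraph d).Adj v u := by
  intro v hv
  have h4 := Nat.four_le_two_pow hd
  rcases v.eq_path_or_eq_node with ⟨i, j, rfl⟩ | ⟨l, t, rfl⟩
  · have hj : (j : ℕ) = 0 ∨ (j : ℕ) = 2 ^ d - 1 := by
      by_contra! hj
      exact hv (lbWeight_path_of_pos_of_lt Xs Ys M (Nat.pos_of_ne_zero hj.1) (by omega))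
    rcases hj with hj | hj
    · exact ⟨path i ⟨1, by omega⟩,
        lbWeight_path_of_pos_of_lt Xs Ys M one_pos (by simp; omega),
        adj_path_path.2 ⟨rfl, .inl (by simp [hj])⟩⟩
    · exact ⟨path i ⟨2 ^ d - 2, by omega⟩,
        lbWeight_path_of_pos_of_lt Xs Ys M (by simp; omega) (by simp; omega),
        adj_path_path.2 ⟨rfl, .inr (by simp; omega)⟩⟩
  · obtain rfl | ⟨l, rfl⟩ := Fin.eq_zero_or_eq_succ l
    · refine absurd ?_ hv
      show lbWeight d Xs Ys M (node 0 t) = 1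
      rw [lbWeight_node, if_pos (by simp; omega)]
    · exact ⟨parent l t, lbWeight_parent Xs Ys M l t, adj_parent l t⟩

lemma reachable_root_of_node (hd : 0 < d) (l : Fin (d + 1)) (t : Fin (2 ^ (l : ℕ)))
    (h : lbWeight d Xs Ys M (node l t) = 1) :
    ((lbGraph d).induce {u | lbWeight d Xs Ys M u = 1}).Reachable
      ⟨node l t, h⟩ ⟨root, lbWeight_root Xs Ys M hd⟩ := by
  induction l using Fin.induction with
  | zero =>
    obtain rfl : t = ⟨0, by simp⟩ := Fin.ext (by have := t.isLt; simp at this ⊢; omega)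
    rfl
  | succ l ih =>
    exact (SimpleGraph.induce_adj.2 (adj_parent l t)).reachable.trans
      (ih _ (lbWeight_parent Xs Ys M l t))

lemma reachable_root_of_not_mem_left (hd : 0 < d) {i : Fin (2 ^ d)} (hi : i ∉ Xs)
    (j : Fin (2 ^ d)) (h : lbWeight d Xs Ys M (path i j) = 1) :
    ((lbGraph d).induce {u | lbWeight d Xs Ys M u = 1}).Reachable
      ⟨path i j, h⟩ ⟨root, lbWeight_root Xs Ys M hd⟩ := by
  have hpos := Nat.two_pow_pos d
  have h₀ : lbWeight d Xs Ys M (path i ⟨0, hpos⟩) = 1 := by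
    rw [lbWeight_path, if_pos rfl, if_neg hi]
  have hleaf : lbWeight d Xs Ys M (leaf ⟨0, hpos⟩) = 1 := by simp [lbWeight_leaf]
  have hrow : ((lbGraph d).induce {u | lbWeight d Xs Ys M u = 1}).Reachable
      ⟨path i ⟨0, hpos⟩, h₀⟩ ⟨path i j, h⟩ := by
    have hj := j.isLt
    set f : ℕ → LBVertex d := fun k => path i ⟨min k (2 ^ d - 1), by omega⟩
    have hfj : f j = path i j := congrArg (path i) (Fin.ext (by simp; omega))
    refine SimpleGraph.induce_reachable_of_chain f j (fun k hk => ?_)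
      (fun k hk => adj_path_path.2 ⟨rfl, .inl (by simp; omega)⟩) (by simp [f]) hfj
    rcases hk.eq_or_lt with rfl | hk
    · exact hfj ▸ h
    · rcases Nat.eq_zero_or_pos k with rfl | hk₀
      · simpa [f] using h₀
      · exact lbWeight_path_of_pos_of_lt Xs Ys M (by simp; omega) (by simp; omega)
  exact hrow.symm.trans ((SimpleGraph.induce_adj.2 (adj_path_leaf i _)).reachable.trans
    (reachable_root_of_node hd _ _ hleaf))

lemma reachable_root_of_not_mem_right (hd : 0 < d) {i : Fin (2 ^ d)} (hi : i ∉ Ys)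
    (j : Fin (2 ^ d)) (h : lbWeight d Xs Ys M (path i j) = 1) :
    ((lbGraph d).induce {u | lbWeight d Xs Ys M u = 1}).Reachable
      ⟨path i j, h⟩ ⟨root, lbWeight_root Xs Ys M hd⟩ := by
  have h2 : 2 ≤ 2 ^ d := Nat.one_lt_two_pow hd.ne'
  have hlast : lbWeight d Xs Ys M (path i ⟨2 ^ d - 1, by omega⟩) = 1 := by
    rw [lbWeight_path, if_neg (by simp; omega), if_pos rfl, if_neg hi]
  have hleaf : lbWeight d Xs Ys M (leaf ⟨2 ^ d - 1, by omega⟩) = 1 := by simp [lbWeight_leaf]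
  have hrow : ((lbGraph d).induce {u | lbWeight d Xs Ys M u = 1}).Reachable
      ⟨path i ⟨2 ^ d - 1, by omega⟩, hlast⟩ ⟨path i j, h⟩ := by
    have hj := j.isLt
    set f : ℕ → LBVertex d := fun k => path i ⟨2 ^ d - 1 - k, by omega⟩
    have hfj : f (2 ^ d - 1 - j) = path i j := congrArg (path i) (Fin.ext (by simp; omega))
    refine SimpleGraph.induce_reachable_of_chain f (2 ^ d - 1 - j) (fun k hk => ?_)
      (fun k hk => adj_path_path.2 ⟨rfl, .inr (by simp; omega)⟩) rfl hfj
    rcases hk.eq_or_lt with rfl | hk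
    · exact hfj ▸ h
    · rcases Nat.eq_zero_or_pos k with rfl | hk₀
      · exact hlast
      · exact lbWeight_path_of_pos_of_lt Xs Ys M (by simp; omega) (by simp; omega)
  exact hrow.symm.trans ((SimpleGraph.induce_adj.2 (adj_path_leaf i _)).reachable.trans
    (reachable_root_of_node hd _ _ hleaf))

theorem induce_lbWeight_eq_one_connected (hd : 0 < d) (hXY : Disjoint Xs Ys) :
    ((lbGraph d).induce {u | lbWeight d Xs Ys M u = 1}).Connected := by
  rw [SimpleGraph.connected_iff_exists_forall_reachable]
  refine ⟨⟨root, lbWeight_root Xs Ys M hd⟩, fun ⟨v, hv⟩ => .symm ?_⟩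
  rcases v.eq_path_or_eq_node with ⟨i, j, rfl⟩ | ⟨l, t, rfl⟩
  · by_cases hX : i ∈ Xs
    · exact reachable_root_of_not_mem_right hd (Finset.disjoint_left.1 hXY hX) j hv
    · exact reachable_root_of_not_mem_left hd hX j hv
  · exact reachable_root_of_node hd l t hv

end
end LBVertex

theorem Finset.sum_filter_eq_one_lt_card {α R : Type*} [Fintype α] [Semiring R] [PartialOrder R]
    [IsStrictOrderedRing R] (w : α → R) [DecidablePred (fun a => w a = 1)] {a : α}
    (ha : w a ≠ 1) :
    ∑ v ∈ Finset.univ.filter (fun a => w a = 1), w v < Fintype.card α := by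
  rw [Finset.sum_congr rfl fun v hv => (Finset.mem_filter.1 hv).2, Finset.sum_const, nsmul_one]
  exact_mod_cast Finset.card_lt_card (Finset.filter_ssubset.2 ⟨a, Finset.mem_univ a, ha⟩)

open scoped Classical in
/-- In the lower-bound graph with weights encoding set-disjointness instances `X, Y`, with
`M = α·n + 1` (`n` = number of vertices): if `X ∩ Y ≠ ∅` then every connected dominating set
contains a vertex of weight `M`, while if `X ∩ Y = ∅` then the set of all weight-1 vertices
is a connected dominating set of total weight less than `n`. -/
theorem stmt_19 (d : ℕ) (hd : 2 ≤ d) (α : ℝ) (hα : 0 < α)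
    (Xs Ys : Finset (Fin (2 ^ d))) (n M : ℝ)
    (hn : n = Fintype.card (LBVertex d)) (hM : M = α * n + 1) :
    ((Xs ∩ Ys).Nonempty →
      ∀ D : Set (LBVertex d),
        (∀ v, v ∉ D → ∃ u ∈ D, (lbGraph d).Adj v u) →
        ((lbGraph d).induce D).Connected →
        ∃ v ∈ D, lbWeight d Xs Ys M v = M) ∧
    (Xs ∩ Ys = ∅ →
      (∀ v, v ∉ {u | lbWeight d Xs Ys M u = 1} →
        ∃ u ∈ {u | lbWeight d Xs Ys M u = 1}, (lbGraph d).Adj v u) ∧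
      ((lbGraph d).induce {u | lbWeight d Xs Ys M u = 1}).Connected ∧
      (∑ v ∈ Finset.univ.filter (fun u : LBVertex d => lbWeight d Xs Ys M u = 1),
        lbWeight d Xs Ys M v) < n) := by
  have hM₁ : M ≠ 1 := by
    have : (1 : ℝ) ≤ n := hn ▸ Nat.one_le_cast.2 (Fintype.card_pos_iff.2 ⟨LBVertex.root⟩)
    nlinarith
  have h4 := Nat.four_le_two_pow hd
  constructor
  · rintro ⟨i, hi⟩
    rw [Finset.mem_inter] at hi
    exact LBVertex.exists_lbWeight_eq_of_mem_inter hd hi.1 hi.2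
  · intro hXY
    refine ⟨LBVertex.exists_adj_lbWeight_eq_one hd, LBVertex.induce_lbWeight_eq_one_connected
      (by omega) (Finset.disjoint_iff_inter_eq_empty.2 hXY), ?_⟩
    have hleaf : lbWeight d Xs Ys M (LBVertex.leaf ⟨1, by omega⟩) ≠ 1 := by
      rw [LBVertex.lbWeight_leaf, if_neg (by simp; omega)]
      exact hM₁
    exact hn ▸ Finset.sum_filter_eq_one_lt_card _ hleaf
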